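/- arXiv:2306.04189 — 2 statements merged into one kernel-verified Lean document; each statement's English description precedes it below -/
import Mathlib

section
/- Let D be a finite set with |D| = n. The number of pairs (S, F), where S ⊆ D and F ⊆ D × D, such that for all x, y ∈ D, if x ∈ S and (x, y) ∈ F then y ∈ S, equals Σ_{k=0}^{n} C(n,k) · 2^{n² − k(n−k)}. (This is the model count of the 'friends and smokers' sentence ∀ X, Y ∈ Δ. smokes(X) ∧ friends(X,Y) ⇒ smokes(Y) over a domain of size n.) -/
/-!
For a fixed set `S` of smokers, the sentence says exactly that the friendship relation `F` avoids
the `|S| * (n - |S|)` pairs leading from `S` out of `S`; every other pair of `D × D` may or may not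
be in `F`. So each `S` of size `k` admits `2 ^ (n ^ 2 - k * (n - k))` relations, and grouping the
sets `S` by size gives the binomial sum.
-/

open Finset

namespace Finset

variable {α β : Type*}

theorem card_filter_product (s : Finset α) (t : Finset β) (p : α × β → Prop) [DecidablePred p] :
    #{ab ∈ s ×ˢ t | p ab} = ∑ a ∈ s, #{b ∈ t | p (a, b)} := by
  simp only [card_filter, sum_product]

theorem filter_powerset_disjoint [DecidableEq α] (s t : Finset α) :
    {u ∈ s.powerset | Disjoint u t} = (s \ t).powerset := by
  ext u
  simp [subset_sdiff]

end Finset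

section FriendsSmokers

variable {α : Type*} [DecidableEq α] {D S : Finset α} {F : Finset (α × α)}

theorem forall_mem_imp_mem_iff_disjoint (hF : F ⊆ D ×ˢ D) :
    (∀ x ∈ D, ∀ y ∈ D, x ∈ S → (x, y) ∈ F → y ∈ S) ↔ Disjoint F (S ×ˢ (D \ S)) := by
  simp only [disjoint_left, mem_product, mem_sdiff, Prod.forall]
  constructor
  · rintro h x y hxy ⟨hxS, hyD, hyS⟩
    exact hyS (h x (mem_product.1 (hF hxy)).1 y hyD hxS hxy)
  · intro h x _ y hyD hxS hxy
    by_contra hyS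
    exact h x y hxy ⟨hxS, hyD, hyS⟩

theorem card_relations_set_closed_under (hS : S ⊆ D) :
    #{F ∈ (D ×ˢ D).powerset | ∀ x ∈ D, ∀ y ∈ D, x ∈ S → (x, y) ∈ F → y ∈ S}
      = 2 ^ (#D ^ 2 - #S * (#D - #S)) := by
  have hsub : S ×ˢ (D \ S) ⊆ D ×ˢ D := product_subset_product hS sdiff_subset
  rw [filter_congr fun F hF => forall_mem_imp_mem_iff_disjoint (mem_powerset.1 hF),
    filter_powerset_disjoint, card_powerset, card_sdiff_of_subset hsub, card_product,
    card_product, card_sdiff_of_subset hS, sq]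

end FriendsSmokers

/-- The model count of the `friends and smokers` sentence
`∀ X, Y ∈ Δ. smokes(X) ∧ friends(X,Y) ⇒ smokes(Y)` over a domain of size `n`. -/
theorem count_friends_smokers {α : Type*} [DecidableEq α]
    (D : Finset α) (n : ℕ) (hD : D.card = n) :
    ((D.powerset ×ˢ (D ×ˢ D).powerset).filter
        (fun SF => ∀ x ∈ D, ∀ y ∈ D, x ∈ SF.1 → (x, y) ∈ SF.2 → y ∈ SF.1)).card
      = ∑ k ∈ Finset.range (n + 1), n.choose k * 2 ^ (n ^ 2 - k * (n - k)) := by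
  subst hD
  rw [card_filter_product,
    sum_congr rfl fun S hS => card_relations_set_closed_under (mem_powerset.1 hS),
    sum_powerset_apply_card (fun k => 2 ^ (#D ^ 2 - k * (#D - k)))]
  simp only [smul_eq_mul]
end

section
/- For every natural number m ≥ 0, m! = Σ_{l=0}^{m} C(m,l) · (−1)^{m−l} · PI(m, l) (as an identity in the integers), where PI(m, l) is the number of partial injections from a set of size m to a set of size l. (The left-hand side is the number of injective endofunctions on a set of size m, which are exactly the permutations.) -/
/-- `PI m n` is the number of partial injections from a set of size `m`
to a set of size `n`. -/
def PI (m n : ℕ) : ℕ :=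
  Fintype.card {R : Finset (Fin m × Fin n) //
    (∀ x y z, (x, y) ∈ R → (x, z) ∈ R → y = z) ∧
    (∀ x z y, (x, y) ∈ R → (z, y) ∈ R → x = z)}

/-!
Recording the domain `S` of a partial injection and the embedding it induces on `S` gives
`PI m l = ∑ₖ C(m, k) · l.descFactorial k`, and `l.descFactorial k = k! · C(l, k)`. The alternating
sum is the `m`-th forward difference of `l ↦ PI m l` at `0`, and `Δᵐ C(·, k)` vanishes at `0`
unless `k = m`, where it is `1`; only the top term `C(m, m) · m!` survives.
-/

open Finset Function Nat
open scoped fwdDiff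

section PartialInjection

variable {α β : Type*}

def IsPartialInjection (R : Finset (α × β)) : Prop :=
  (∀ x y z, (x, y) ∈ R → (x, z) ∈ R → y = z) ∧ (∀ x z y, (x, y) ∈ R → (z, y) ∈ R → x = z)

variable [DecidableEq α] [DecidableEq β]

def embeddingGraph (S : Finset α) (f : S ↪ β) : Finset (α × β) :=
  S.attach.image fun x ↦ (x.1, f x)

lemma mem_embeddingGraph {S : Finset α} {f : S ↪ β} {a : α} {b : β} :
    (a, b) ∈ embeddingGraph S f ↔ ∃ h : a ∈ S, f ⟨a, h⟩ = b := by
  simp [embeddingGraph]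

lemma image_fst_embeddingGraph (S : Finset α) (f : S ↪ β) :
    (embeddingGraph S f).image Prod.fst = S := by
  ext a
  simp [embeddingGraph]

lemma isPartialInjection_embeddingGraph (S : Finset α) (f : S ↪ β) :
    IsPartialInjection (embeddingGraph S f) := by
  constructor
  · rintro x _ _ hy hz
    obtain ⟨_, rfl⟩ := mem_embeddingGraph.mp hy
    obtain ⟨_, rfl⟩ := mem_embeddingGraph.mp hz
    rfl
  · rintro x z _ hx hz
    obtain ⟨_, rfl⟩ := mem_embeddingGraph.mp hx
    obtain ⟨_, hzx⟩ := mem_embeddingGraph.mp hz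
    exact congrArg Subtype.val (f.injective hzx).symm

lemma embeddingGraph_injective :
    Injective fun p : Σ S : Finset α, S ↪ β ↦ embeddingGraph p.1 p.2 := by
  rintro ⟨S, f⟩ ⟨T, g⟩ (h : embeddingGraph S f = embeddingGraph T g)
  obtain rfl : S = T := by
    simpa only [image_fst_embeddingGraph] using congrArg (image Prod.fst) h
  have hfg : f = g := by
    ext ⟨a, ha⟩
    have hmem : (a, f ⟨a, ha⟩) ∈ embeddingGraph S g := h ▸ mem_embeddingGraph.mpr ⟨ha, rfl⟩
    obtain ⟨_, hga⟩ := mem_embeddingGraph.mp hmem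
    rw [hga]
  rw [hfg]

lemma exists_embeddingGraph_eq {R : Finset (α × β)} (hR : IsPartialInjection R) :
    ∃ (S : Finset α) (f : S ↪ β), embeddingGraph S f = R := by
  have hex (x : R.image Prod.fst) : ∃ b, (x.1, b) ∈ R := by
    obtain ⟨⟨_, b⟩, hab, rfl⟩ := mem_image.mp x.2
    exact ⟨b, hab⟩
  choose f hf using hex
  have hinj : Injective f := fun x y hxy ↦ Subtype.ext (hR.2 _ _ _ (hf x) (hxy ▸ hf y))
  refine ⟨_, ⟨f, hinj⟩, ?_⟩
  ext ⟨a, b⟩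
  rw [mem_embeddingGraph]
  constructor
  · rintro ⟨ha, rfl⟩
    exact hf ⟨a, ha⟩
  · intro hab
    have ha : a ∈ R.image Prod.fst := mem_image.mpr ⟨(a, b), hab, rfl⟩
    exact ⟨ha, hR.1 _ _ _ (hf ⟨a, ha⟩) hab⟩

noncomputable def sigmaEmbeddingEquivPartialInjection :
    (Σ S : Finset α, S ↪ β) ≃ {R : Finset (α × β) // IsPartialInjection R} :=
  Equiv.ofBijective
    (fun p ↦ ⟨embeddingGraph p.1 p.2, isPartialInjection_embeddingGraph p.1 p.2⟩)
    ⟨fun _ _ h ↦ embeddingGraph_injective (congrArg Subtype.val h), fun R ↦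
      let ⟨S, f, hSf⟩ := exists_embeddingGraph_eq R.2; ⟨⟨S, f⟩, Subtype.ext hSf⟩⟩

theorem natCard_partialInjection [Fintype α] [Fintype β] :
    Nat.card {R : Finset (α × β) // IsPartialInjection R} =
      ∑ k ∈ range (Fintype.card α + 1),
        (Fintype.card α).choose k * (Fintype.card β).descFactorial k := by
  rw [← Nat.card_congr sigmaEmbeddingEquivPartialInjection, Nat.card_eq_fintype_card,
    Fintype.card_sigma]
  simp only [Fintype.card_embedding_eq, Fintype.card_coe]
  rw [← powerset_univ, sum_powerset_apply_card, Finset.card_univ]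
  simp only [smul_eq_mul]

end PartialInjection

theorem PI_eq_sum_choose_mul_descFactorial (m n : ℕ) :
    PI m n = ∑ k ∈ range (m + 1), m.choose k * n.descFactorial k := by
  have hcard := natCard_partialInjection (α := Fin m) (β := Fin n)
  rw [Fintype.card_fin, Fintype.card_fin] at hcard
  rw [PI, ← Nat.card_eq_fintype_card]
  exact hcard

theorem fwdDiff_iter_descFactorial_zero (n k : ℕ) :
    (Δ_[1])^[n] (fun x : ℕ ↦ (x.descFactorial k : ℤ)) 0 = if n = k then (n ! : ℤ) else 0 := by
  have hdesc : (fun x : ℕ ↦ (x.descFactorial k : ℤ)) = (k ! : ℤ) • fun x ↦ (x.choose k : ℤ) := by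
    ext x
    simp [descFactorial_eq_factorial_mul_choose]
  rw [hdesc, fwdDiff_iter_const_smul, Pi.smul_apply, fwdDiff_iter_choose_zero]
  split_ifs with h <;> simp [h]

theorem fwdDiff_iter_PI_zero (m : ℕ) : (Δ_[1])^[m] (fun l ↦ (PI m l : ℤ)) 0 = m ! := by
  have hPI : (fun l ↦ (PI m l : ℤ)) =
      ∑ k ∈ range (m + 1), (m.choose k : ℤ) • fun l ↦ (l.descFactorial k : ℤ) := by
    ext l
    simp [PI_eq_sum_choose_mul_descFactorial]
  simp only [hPI, fwdDiff_iter_finsetSum, Finset.sum_apply, fwdDiff_iter_const_smul,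
    Pi.smul_apply, fwdDiff_iter_descFactorial_zero, smul_eq_mul, mul_ite, mul_zero,
    sum_ite_eq, mem_range]
  rw [if_pos (lt_add_one m), choose_self, cast_one, one_mul]

/-- The number of injective endofunctions (permutations) on a set of size `m`
is `m!`, expressed via Crane's solution using partial injection counts
(identity in the integers). -/
theorem injective_endofunction_count (m : ℕ) :
    (m.factorial : ℤ) =
      ∑ l ∈ Finset.range (m + 1), (m.choose l : ℤ) * (-1) ^ (m - l) * PI m l := by
  rw [← fwdDiff_iter_PI_zero, fwdDiff_iter_eq_sum_shift]
  refine sum_congr rfl fun l _ ↦ ?_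
  rw [zero_add, smul_eq_mul, smul_eq_mul, mul_one]
  ring
end
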